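/- arXiv:1003.5766 — 2 statements merged into one kernel-verified Lean document; each statement's English description precedes it below -/
import Mathlib

section
/- Let X ~ B(m,p), and for fixed sample value x̄ = X/m, define C implicitly via D(x̄ || C) = log₂(1/ε)/m with C ≥ x̄ (the Chernoff one-sided confidence bound). Then Pr[p > C-value computed from X] ≤ ε; i.e., the Chernoff-based one-sided interval [0, C] is a conservative confidence interval for p with confidence level 1 − ε. -/
/-- Binary relative entropy (base 2). -/
noncomputable def binRelEntropy (a b : ℝ) : ℝ :=
  a * Real.logb 2 (a / b) + (1 - a) * Real.logb 2 ((1 - a) / (1 - b))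

/-- `log (u/v) = - log (v/u)` (unconditionally, thanks to junk values). -/
lemma log_div_symm (u v : ℝ) : Real.log (u / v) = -Real.log (v / u) := by
  rcases eq_or_ne u 0 with hu | hu
  · simp [hu]
  rcases eq_or_ne v 0 with hv | hv
  · simp [hv]
  rw [Real.log_div hu hv, Real.log_div hv hu]; ring

/-- Monotonicity of binary relative entropy in the second argument, in
natural-log form. -/
lemma relent_log_mono {x q1 q2 : ℝ} (hx0 : 0 ≤ x) (hxq : x ≤ q1)
    (hq12 : q1 ≤ q2) (hq2 : q2 < 1) (hq1pos : 0 < q1) :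
    x * Real.log (x / q1) + (1 - x) * Real.log ((1 - x) / (1 - q1)) ≤
      x * Real.log (x / q2) + (1 - x) * Real.log ((1 - x) / (1 - q2)) := by
  have hq1lt : q1 < 1 := lt_of_le_of_lt hq12 hq2
  have h1q1 : 0 < 1 - q1 := by linarith
  have h1q2 : 0 < 1 - q2 := by linarith
  have hq2pos : 0 < q2 := lt_of_lt_of_le hq1pos hq12
  have hx1 : x < 1 := lt_of_le_of_lt hxq hq1lt
  have h1x : 0 < 1 - x := by linarith
  rcases hx0.eq_or_lt with h | hxpos
  · subst h
    simp only [zero_div, Real.log_zero, mul_zero, zero_mul, zero_add, sub_zero, one_mul,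
      zero_mul, zero_add]
    have : (1:ℝ) / (1 - q1) ≤ 1 / (1 - q2) := by
      apply div_le_div_of_nonneg_left (by norm_num) h1q2 (by linarith)
    exact Real.log_le_log (by positivity) this
  · have e1 : x * Real.log (x / q1) - x * Real.log (x / q2) = x * Real.log (q2 / q1) := by
      rw [Real.log_div (ne_of_gt hxpos) (ne_of_gt hq1pos),
        Real.log_div (ne_of_gt hxpos) (ne_of_gt hq2pos),
        Real.log_div (ne_of_gt hq2pos) (ne_of_gt hq1pos)]
      ring
    have e2 : (1 - x) * Real.log ((1 - x) / (1 - q2)) -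
        (1 - x) * Real.log ((1 - x) / (1 - q1)) = (1 - x) * Real.log ((1 - q1) / (1 - q2)) := by
      rw [Real.log_div (ne_of_gt h1x) (ne_of_gt h1q2),
        Real.log_div (ne_of_gt h1x) (ne_of_gt h1q1),
        Real.log_div (ne_of_gt h1q1) (ne_of_gt h1q2)]
      ring
    have b1 : Real.log (q2 / q1) ≤ (q2 - q1) / q1 := by
      have h := Real.log_le_sub_one_of_pos (show (0:ℝ) < q2 / q1 by positivity)
      have e : q2 / q1 - 1 = (q2 - q1) / q1 := by field_simp
      linarith [h, e]
    have b2 : (q2 - q1) / (1 - q1) ≤ Real.log ((1 - q1) / (1 - q2)) := by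
      have h := Real.log_le_sub_one_of_pos (show (0:ℝ) < (1 - q2) / (1 - q1) by positivity)
      have e : Real.log ((1 - q1) / (1 - q2)) = -Real.log ((1 - q2) / (1 - q1)) :=
        log_div_symm _ _
      have e2 : (1 - q2) / (1 - q1) - 1 = -((q2 - q1) / (1 - q1)) := by
        field_simp
        ring
      rw [e]; linarith [h, e2]
    have key : x * ((q2 - q1) / q1) ≤ (1 - x) * ((q2 - q1) / (1 - q1)) := by
      rw [show x * ((q2 - q1) / q1) = x * (q2 - q1) / q1 from (mul_div_assoc _ _ _).symm,
        show (1 - x) * ((q2 - q1) / (1 - q1)) = (1 - x) * (q2 - q1) / (1 - q1) from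
          (mul_div_assoc _ _ _).symm,
        div_le_div_iff₀ hq1pos h1q1]
      have hq : 0 ≤ q2 - q1 := by linarith
      nlinarith [mul_nonneg hq (sub_nonneg.mpr hxq)]
    have c1 : x * Real.log (q2 / q1) ≤ x * ((q2 - q1) / q1) :=
      mul_le_mul_of_nonneg_left b1 hx0
    have c2 : (1 - x) * ((q2 - q1) / (1 - q1)) ≤ (1 - x) * Real.log ((1 - q1) / (1 - q2)) :=
      mul_le_mul_of_nonneg_left b2 (le_of_lt h1x)
    linarith

/-- Monotonicity of `binRelEntropy` in the second argument. -/
lemma binRelEntropy_mono {x q1 q2 : ℝ} (hx0 : 0 ≤ x) (hxq : x ≤ q1)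
    (hq12 : q1 ≤ q2) (hq2 : q2 < 1) (hq1pos : 0 < q1) :
    binRelEntropy x q1 ≤ binRelEntropy x q2 := by
  have h2 : (0:ℝ) < Real.log 2 := Real.log_pos (by norm_num)
  have := relent_log_mono hx0 hxq hq12 hq2 hq1pos
  unfold binRelEntropy Real.logb
  rw [mul_div_assoc', mul_div_assoc', mul_div_assoc', mul_div_assoc',
    ← add_div, ← add_div, div_le_div_iff₀ h2 h2]
  nlinarith [this]

set_option maxHeartbeats 1600000 in
/-- The Chernoff-based one-sided confidence bound is conservative:
if for each possible outcome `k` of `X ~ B(m,p)` the bound `C k` satisfies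
`k/m ≤ C k ≤ 1` and either `D(k/m ‖ C k) = log₂(1/ε)/m` or `C k = 1`,
then `Pr[p > C(X)] ≤ ε`, i.e. `[0, C(X)]` is a conservative one-sided
confidence interval for `p` with confidence level `1 − ε`. -/
theorem chernoff_one_sided_confidence
    (m : ℕ) (hm : 1 ≤ m) (p ε : ℝ) (hp0 : 0 ≤ p) (hp1 : p ≤ 1)
    (hε : 0 < ε) (hε1 : ε < 1)
    (C : ℕ → ℝ)
    (hC : ∀ k ≤ m, (k : ℝ) / m ≤ C k ∧ C k ≤ 1 ∧
      (binRelEntropy ((k : ℝ) / m) (C k) = Real.logb 2 (1 / ε) / m ∨ C k = 1)) :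
    ∑ k ∈ (Finset.range (m + 1)).filter (fun k => C k < p),
        (m.choose k : ℝ) * p ^ k * (1 - p) ^ (m - k) ≤ ε := by
  have hm0 : (0:ℝ) < m := by exact_mod_cast hm
  have hterm_nonneg : ∀ k, 0 ≤ (m.choose k : ℝ) * p ^ k * (1 - p) ^ (m - k) := by
    intro k
    have h1p' : (0:ℝ) ≤ 1 - p := by linarith
    exact mul_nonneg (mul_nonneg (Nat.cast_nonneg _) (pow_nonneg hp0 _)) (pow_nonneg h1p' _)
  -- trivial case p = 0
  rcases hp0.eq_or_lt with hp | hppos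
  · have : ∀ k ∈ (Finset.range (m + 1)).filter (fun k => C k < p),
        (m.choose k : ℝ) * p ^ k * (1 - p) ^ (m - k) = 0 := by
      intro k hk
      simp only [Finset.mem_filter, Finset.mem_range] at hk
      obtain ⟨hk1, hk2⟩ := hk
      have h1 := (hC k (Nat.lt_succ_iff.mp hk1)).1
      have : (0:ℝ) ≤ (k:ℝ)/m := by positivity
      linarith [hp ▸ hk2]
    rw [Finset.sum_eq_zero this]; linarith
  -- trivial case p = 1
  rcases hp1.eq_or_lt with hp1' | hplt
  · have : ∀ k ∈ (Finset.range (m + 1)).filter (fun k => C k < p),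
        (m.choose k : ℝ) * p ^ k * (1 - p) ^ (m - k) = 0 := by
      intro k hk
      simp only [Finset.mem_filter, Finset.mem_range] at hk
      obtain ⟨hk1, hk2⟩ := hk
      have hkm : k ≤ m := Nat.lt_succ_iff.mp hk1
      have hklt : k < m := by
        rcases lt_or_eq_of_le hkm with h | h
        · exact h
        · exfalso
          subst h
          have h1 := (hC k le_rfl).1
          rw [div_self (ne_of_gt hm0)] at h1
          linarith
      have : 1 - p = 0 := by linarith [hp1'.symm]
      rw [this, zero_pow (by omega), mul_zero]
    rw [Finset.sum_eq_zero this]; linarith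
  -- main case 0 < p < 1
  set F := (Finset.range (m + 1)).filter (fun k => C k < p) with hF_def
  rcases F.eq_empty_or_nonempty with hF | hF
  · rw [hF]; simp; linarith
  set a := F.max' hF with ha_def
  have haF : a ∈ F := F.max'_mem hF
  have haR : a ∈ Finset.range (m+1) := (Finset.mem_filter.mp haF).1
  have ham : a ≤ m := Nat.lt_succ_iff.mp (Finset.mem_range.mp haR)
  have hCa : C a < p := (Finset.mem_filter.mp haF).2
  obtain ⟨h1, h2, h3⟩ := hC a ham
  have hL : 0 < Real.logb 2 (1 / ε) :=
    Real.logb_pos (by norm_num) (one_lt_one_div hε hε1)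
  have hD : binRelEntropy ((a : ℝ) / m) (C a) = Real.logb 2 (1 / ε) / m := by
    rcases h3 with h | h
    · exact h
    · exfalso; rw [h] at hCa; linarith
  set r := (a : ℝ) / m with hr_def
  have hr0 : 0 ≤ r := by positivity
  have hrp : r < p := lt_of_le_of_lt h1 hCa
  have hr1 : r < 1 := lt_of_lt_of_le hrp hp1
  have h1r : 0 < 1 - r := by linarith
  have h1p : 0 < 1 - p := by linarith
  have hCa0 : 0 < C a := by
    by_contra h
    push_neg at h
    have hCa0' : C a = 0 := le_antisymm h (le_trans hr0 h1)
    have hr0' : r = 0 := le_antisymm (hCa0' ▸ h1) hr0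
    rw [hCa0', hr0'] at hD
    have : binRelEntropy 0 0 = 0 := by
      simp [binRelEntropy]
    rw [this] at hD
    have : Real.logb 2 (1 / ε) = 0 := by
      field_simp at hD
      linarith [hD]
    linarith
  -- D(r ‖ p) ≥ L
  have hDp : Real.logb 2 (1 / ε) / m ≤ binRelEntropy r p := by
    rw [← hD]
    exact binRelEntropy_mono hr0 h1 (le_of_lt hCa) hplt hCa0
  -- the Chernoff bound value
  set B := (p / r) ^ a * ((1 - p) / (1 - r)) ^ (m - a) with hB_def
  have hpra : 0 < (p / r) ^ a := by
    rcases Nat.eq_zero_or_pos a with h | h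
    · simp [h]
    · have : 0 < r := by
        rw [hr_def]; positivity
      positivity
  have hB2 : 0 < ((1 - p) / (1 - r)) ^ (m - a) := by positivity
  have hBpos : 0 < B := mul_pos hpra hB2
  -- B ≤ ε via logs
  have hlog2 : (0:ℝ) < Real.log 2 := Real.log_pos (by norm_num)
  have hmr : (m:ℝ) * r = a := by
    rw [hr_def]; field_simp
  have hm1r : (m:ℝ) * (1 - r) = ((m - a : ℕ) : ℝ) := by
    push_cast [Nat.cast_sub ham]
    rw [hr_def]; field_simp
  have hEnt : (m:ℝ) * (binRelEntropy r p * Real.log 2) =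
      (a:ℝ) * Real.log (r / p) + ((m - a : ℕ):ℝ) * Real.log ((1 - r) / (1 - p)) := by
    unfold binRelEntropy Real.logb
    rw [← hmr, ← hm1r]
    field_simp
  have hlogB : Real.log B = -((m:ℝ) * (binRelEntropy r p * Real.log 2)) := by
    rw [hB_def, Real.log_mul (ne_of_gt hpra) (ne_of_gt hB2), Real.log_pow, Real.log_pow,
      hEnt, log_div_symm p r, log_div_symm (1-p) (1-r)]
    ring
  have hBε : B ≤ ε := by
    rw [← Real.log_le_log_iff hBpos hε, hlogB]
    have h1 : Real.logb 2 (1 / ε) ≤ (m:ℝ) * binRelEntropy r p := by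
      rw [div_le_iff₀ hm0] at hDp
      linarith [hDp]
    have h2 : Real.logb 2 (1 / ε) = -Real.logb 2 ε := by
      rw [one_div, Real.logb_inv]
    have h3 : Real.logb 2 ε * Real.log 2 = Real.log ε := by
      unfold Real.logb
      field_simp
    nlinarith [h1, hlog2]
  -- the Chernoff argument: sum over range (a+1) is ≤ B
  set t := r * (1 - p) / (p * (1 - r)) with ht_def
  have ht0 : 0 ≤ t := by positivity
  have ht1 : t ≤ 1 := by
    rw [ht_def, div_le_one (by positivity)]
    nlinarith
  have hta : 0 < t ^ a := by
    rcases Nat.eq_zero_or_pos a with h | h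
    · simp [h]
    · have hr' : 0 < r := by
        rw [hr_def]; positivity
      positivity
  set S := ∑ k ∈ Finset.range (a + 1), (m.choose k : ℝ) * p ^ k * (1 - p) ^ (m - k) with hS_def
  clear_value t S
  have claim1 : t ^ a * S ≤ (p * t + (1 - p)) ^ m := by
    rw [hS_def, Finset.mul_sum]
    calc ∑ k ∈ Finset.range (a + 1), t ^ a * ((m.choose k : ℝ) * p ^ k * (1 - p) ^ (m - k))
        ≤ ∑ k ∈ Finset.range (a + 1), t ^ k * ((m.choose k : ℝ) * p ^ k * (1 - p) ^ (m - k)) := by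
          apply Finset.sum_le_sum
          intro k hk
          exact mul_le_mul_of_nonneg_right
            (pow_le_pow_of_le_one ht0 ht1 (Nat.lt_succ_iff.mp (Finset.mem_range.mp hk)))
            (hterm_nonneg k)
      _ ≤ ∑ k ∈ Finset.range (m + 1), t ^ k * ((m.choose k : ℝ) * p ^ k * (1 - p) ^ (m - k)) := by
          apply Finset.sum_le_sum_of_subset_of_nonneg
          · exact Finset.range_subset_range.mpr (by omega)
          · intro k _ _
            exact mul_nonneg (by positivity) (hterm_nonneg k)
      _ = (p * t + (1 - p)) ^ m := by
          rw [add_pow]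
          apply Finset.sum_congr rfl
          intro k _
          ring
  have claim2 : (p * t + (1 - p)) ^ m = ((1 - p) / (1 - r)) ^ m := by
    congr 1
    rw [ht_def]
    field_simp
    ring
  have claim3 : ((1 - p) / (1 - r)) ^ m = B * t ^ a := by
    rcases Nat.eq_zero_or_pos a with h | h
    · have hr' : r = 0 := by
        rw [hr_def, h]; simp
      rw [hB_def, h, hr']
      simp
    · have hr' : 0 < r := by
        rw [hr_def]; positivity
      have key : (p / r) * t = (1 - p) / (1 - r) := by
        rw [ht_def]
        field_simp
      rw [hB_def, mul_comm ((p / r) ^ a) _, mul_assoc, ← mul_pow, key, ← pow_add,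
        Nat.sub_add_cancel ham]
  have hSB : S ≤ B := by
    have h := claim1.trans_eq (claim2.trans claim3)
    rw [mul_comm (t ^ a) S] at h
    exact le_of_mul_le_mul_right h hta
  -- put it all together
  have hFsub : F ⊆ Finset.range (a + 1) := by
    intro k hk
    rw [Finset.mem_range, Nat.lt_succ_iff]
    exact F.le_max' k hk
  calc ∑ k ∈ F, (m.choose k : ℝ) * p ^ k * (1 - p) ^ (m - k)
      ≤ S := by
        rw [hS_def]
        exact Finset.sum_le_sum_of_subset_of_nonneg hFsub (fun k _ _ => hterm_nonneg k)
    _ ≤ B := hSB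
    _ ≤ ε := hBε
end

section
/- For integers 0 ≤ n ≤ m with 0 < n < m, the binomial coefficient satisfies C(m, n) ≤ (1/√(2π m λ(1−λ))) · 2^{m h(λ)}, where λ = n/m and h(λ) = −λ log₂ λ − (1−λ) log₂(1−λ) is the binary entropy. -/
open Stirling Real Filter Topology
open scoped Nat

lemma sqrt_pi_le_stirlingSeq' {k : ℕ} (hk : 1 ≤ k) : Real.sqrt Real.pi ≤ stirlingSeq k := by
  obtain ⟨j, rfl⟩ := Nat.exists_eq_add_of_le' hk
  have htend : Tendsto (stirlingSeq ∘ Nat.succ) atTop (𝓝 (Real.sqrt Real.pi)) :=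
    tendsto_stirlingSeq_sqrt_pi.comp (tendsto_add_atTop_nat 1)
  exact stirlingSeq'_antitone.le_of_tendsto htend j

lemma stirlingSeq_anti {i j : ℕ} (hi : 1 ≤ i) (hij : i ≤ j) :
    stirlingSeq j ≤ stirlingSeq i := by
  obtain ⟨a, rfl⟩ := Nat.exists_eq_add_of_le' hi
  obtain ⟨b, hb⟩ := Nat.exists_eq_add_of_le hij
  subst hb
  have := stirlingSeq'_antitone (Nat.le_add_right a b)
  simpa [Function.comp, Nat.succ_eq_add_one, Nat.add_right_comm] using this

lemma stirlingSeq_pos' {k : ℕ} (hk : 0 < k) : 0 < stirlingSeq k := by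
  obtain ⟨j, rfl⟩ := Nat.exists_eq_add_of_le' hk
  exact stirlingSeq'_pos j

lemma factorial_eq_stirling (k : ℕ) (hk : 0 < k) :
    (k ! : ℝ) = stirlingSeq k * (Real.sqrt (2 * k) * ((k : ℝ) / Real.exp 1) ^ k) := by
  have hkr : (0 : ℝ) < k := by exact_mod_cast hk
  have hpos : (0 : ℝ) < Real.sqrt (2 * k) * ((k : ℝ) / Real.exp 1) ^ k := by positivity
  rw [stirlingSeq, div_mul_cancel₀ _ hpos.ne']

/-- Entropy bound on binomial coefficients: for `0 < n < m`, with `λ = n/m`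
and `h` the binary entropy (base 2),
`C(m, n) ≤ 2^{m h(λ)} / √(2π m λ(1−λ))`. -/
theorem choose_le_entropy_bound (m n : ℕ) (h0 : 0 < n) (hn : n < m) :
    (m.choose n : ℝ) ≤
      (1 / Real.sqrt (2 * Real.pi * m * ((n : ℝ) / m) * (1 - (n : ℝ) / m))) *
        (2 : ℝ) ^ ((m : ℝ) *
          (-(((n : ℝ) / m) * Real.logb 2 ((n : ℝ) / m)) -
            (1 - (n : ℝ) / m) * Real.logb 2 (1 - (n : ℝ) / m))) := by
  set N := m - n with hNdef
  have hN0 : 0 < N := Nat.sub_pos_of_lt hn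
  have hadd : n + N = m := by omega
  have hm0 : 0 < m := h0.trans hn
  have hmr : (0 : ℝ) < m := by exact_mod_cast hm0
  have hnr : (0 : ℝ) < n := by exact_mod_cast h0
  have hNr : (0 : ℝ) < N := by exact_mod_cast hN0
  have hsum : (n : ℝ) + N = m := by exact_mod_cast hadd
  have hlam : 1 - (n : ℝ) / m = (N : ℝ) / m := by
    field_simp
    linarith
  -- rewrite the rpow term
  have hrpow : (2 : ℝ) ^ ((m : ℝ) *
          (-(((n : ℝ) / m) * Real.logb 2 ((n : ℝ) / m)) -
            (1 - (n : ℝ) / m) * Real.logb 2 (1 - (n : ℝ) / m)))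
      = (m : ℝ) ^ m / ((n : ℝ) ^ n * (N : ℝ) ^ N) := by
    rw [hlam]
    have e1 : (m : ℝ) * (-(((n : ℝ) / m) * Real.logb 2 ((n : ℝ) / m)) -
            ((N : ℝ) / m) * Real.logb 2 ((N : ℝ) / m))
        = (n : ℝ) * Real.logb 2 ((m : ℝ) / n) + (N : ℝ) * Real.logb 2 ((m : ℝ) / N) := by
      rw [Real.logb_div hnr.ne' hmr.ne', Real.logb_div hNr.ne' hmr.ne',
        Real.logb_div hmr.ne' hnr.ne', Real.logb_div hmr.ne' hNr.ne']
      field_simp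
      rw [← hsum]
      ring
    rw [e1, Real.rpow_add two_pos]
    have e2 : ∀ (k : ℕ) (t : ℝ), 0 < t →
        (2 : ℝ) ^ ((k : ℝ) * Real.logb 2 t) = t ^ k := by
      intro k t ht
      rw [mul_comm, Real.rpow_mul (by norm_num), Real.rpow_logb two_pos (by norm_num) ht,
        Real.rpow_natCast]
    rw [e2 n _ (by positivity), e2 N _ (by positivity), div_pow, div_pow,
      div_mul_div_comm, ← pow_add, hadd]
  rw [hrpow]
  -- rewrite the sqrt term
  have hsqrt : Real.sqrt (2 * Real.pi * m * ((n : ℝ) / m) * (1 - (n : ℝ) / m))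
      = Real.sqrt Real.pi * Real.sqrt (2 * n) * Real.sqrt (2 * N) / Real.sqrt (2 * m) := by
    rw [hlam, show (2 * Real.pi * m * ((n : ℝ) / m) * ((N : ℝ) / m))
        = Real.pi * (2 * n) * (2 * N) / (2 * m) by field_simp,
      Real.sqrt_div (by positivity), Real.sqrt_mul (by positivity),
      Real.sqrt_mul Real.pi_pos.le]
  rw [hsqrt]
  -- Stirling decomposition
  have hfm := factorial_eq_stirling m hm0
  have hfn := factorial_eq_stirling n h0
  have hfN := factorial_eq_stirling N hN0
  have ha : 0 < stirlingSeq n := stirlingSeq_pos' h0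
  have hb : 0 < stirlingSeq N := stirlingSeq_pos' hN0
  have hc : 0 < stirlingSeq m := stirlingSeq_pos' hm0
  have hNfac : ((m - n)! : ℝ) = (N ! : ℝ) := by rw [hNdef]
  have hchoose : (m.choose n : ℝ)
      = (stirlingSeq m / (stirlingSeq n * stirlingSeq N)) *
        (Real.sqrt (2 * m) / (Real.sqrt (2 * n) * Real.sqrt (2 * N)) *
          ((m : ℝ) ^ m / ((n : ℝ) ^ n * (N : ℝ) ^ N))) := by
    rw [Nat.cast_choose ℝ hn.le, hNfac, hfm, hfn, hfN]
    have hem : (Real.exp 1) ^ m = (Real.exp 1) ^ n * (Real.exp 1) ^ N := by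
      rw [← pow_add, hadd]
    have hmm : (m : ℝ) ^ m = (m : ℝ) ^ n * (m : ℝ) ^ N := by
      rw [← pow_add, hadd]
    rw [div_pow, div_pow, div_pow, hem, hmm]
    have h1 : Real.sqrt (2 * (n:ℝ)) ≠ 0 := by positivity
    have h2 : Real.sqrt (2 * (N:ℝ)) ≠ 0 := by positivity
    have h3 : Real.sqrt (2 * (m:ℝ)) ≠ 0 := by positivity
    field_simp
  rw [hchoose]
  have hK : 0 ≤ Real.sqrt (2 * m) / (Real.sqrt (2 * n) * Real.sqrt (2 * N)) *
      ((m : ℝ) ^ m / ((n : ℝ) ^ n * (N : ℝ) ^ N)) := by positivity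
  have hπ : (0:ℝ) < Real.sqrt Real.pi := Real.sqrt_pos.mpr Real.pi_pos
  have key : stirlingSeq m / (stirlingSeq n * stirlingSeq N) ≤ 1 / Real.sqrt Real.pi := by
    have h1 : stirlingSeq m ≤ stirlingSeq n := stirlingSeq_anti h0 hn.le
    have h2 : Real.sqrt Real.pi ≤ stirlingSeq N := sqrt_pi_le_stirlingSeq' hN0
    rw [div_le_div_iff₀ (by positivity) hπ]
    calc stirlingSeq m * Real.sqrt Real.pi ≤ stirlingSeq n * stirlingSeq N := by
          exact mul_le_mul h1 h2 hπ.le ha.le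
      _ ≤ 1 * (stirlingSeq n * stirlingSeq N) := by rw [one_mul]
  calc stirlingSeq m / (stirlingSeq n * stirlingSeq N) *
        (Real.sqrt (2 * m) / (Real.sqrt (2 * n) * Real.sqrt (2 * N)) *
          ((m : ℝ) ^ m / ((n : ℝ) ^ n * (N : ℝ) ^ N)))
      ≤ (1 / Real.sqrt Real.pi) *
        (Real.sqrt (2 * m) / (Real.sqrt (2 * n) * Real.sqrt (2 * N)) *
          ((m : ℝ) ^ m / ((n : ℝ) ^ n * (N : ℝ) ^ N))) :=
      mul_le_mul_of_nonneg_right key hK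
    _ = 1 / (Real.sqrt Real.pi * Real.sqrt (2 * n) * Real.sqrt (2 * N) / Real.sqrt (2 * m)) *
        ((m : ℝ) ^ m / ((n : ℝ) ^ n * (N : ℝ) ^ N)) := by
      have h1 : Real.sqrt (2 * (n:ℝ)) ≠ 0 := by positivity
      have h2 : Real.sqrt (2 * (N:ℝ)) ≠ 0 := by positivity
      have h3 : Real.sqrt (2 * (m:ℝ)) ≠ 0 := by positivity
      field_simp
end
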